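/- arXiv:2007.05776 — 2 statements merged into one kernel-verified Lean document; each statement's English description precedes it below -/
import Mathlib

section
/- Let (D_x) be a subordinator with Laplace exponent φ and E_t=inf{u>0:D_u>t} its inverse, so that P(E_t>x)=P(D_x<t). Then for every p>0 and s>0, the Laplace transform of t↦E[E_t^p] is ∫₀^∞ e^{−st} E[E_t^p] dt = Γ(p+1) / ( s·[φ(s)]^p ). -/
/-!
By the layer-cake formula and `P(E_t > x) = P(D_x < t)`,
`E[E_t^p] = p ∫₀^∞ x^{p-1} P(D_x < t) dx`. Exchanging the two integrals (Tonelli, for lower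
Lebesgue integrals), the inner one is the Laplace transform of the distribution function of
`D_x ≥ 0`, namely `∫₀^∞ e^{-st} P(D_x < t) dt = E[e^{-s D_x}] / s = e^{-x φ(s)} / s`, and
`p ∫₀^∞ x^{p-1} e^{-x φ(s)} dx = p Γ(p) / φ(s)^p`. Since the resulting lower integral is finite,
it also computes the Bochner integral.

That `D_x ≥ 0` almost surely follows from `E[e^{-r D_x}] ≤ 1` for all `r > 0` by a Chernoff
bound, and joint measurability of `(t, x) ↦ P(D_x < t)` comes from writing it, by continuity
from below, as a countable supremum over rational times `q < t` of the antitone functions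
`x ↦ P(E_q > x)`.
-/

open MeasureTheory ProbabilityTheory Filter Set Real Topology
open scoped ENNReal

lemma lintegral_exp_neg_mul_Ioi {s : ℝ} (hs : 0 < s) (d : ℝ) :
    ∫⁻ t in Ioi d, ENNReal.ofReal (exp (-(s * t))) = ENNReal.ofReal (exp (-(s * d)) / s) := by
  have h : ∫ t in Ioi d, exp (-(s * t)) = exp (-(s * d)) / s := by
    simpa [neg_mul, neg_div_neg_eq] using integral_exp_mul_Ioi (neg_lt_zero.2 hs) d
  rw [← h, ofReal_integral_eq_lintegral_ofReal
    (Integrable.of_integral_ne_zero (by rw [h]; positivity)) (ae_of_all _ fun t => (exp_pos _).le)]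

lemma lintegral_rpow_mul_exp_neg_mul_Ioi {a r : ℝ} (ha : 0 < a) (hr : 0 < r) :
    ∫⁻ x in Ioi 0, ENNReal.ofReal (x ^ (a - 1) * exp (-(r * x))) =
      ENNReal.ofReal ((1 / r) ^ a * Gamma a) := by
  have h := integral_rpow_mul_exp_neg_mul_Ioi ha hr
  rw [← h, ofReal_integral_eq_lintegral_ofReal
    (Integrable.of_integral_ne_zero (by rw [h]; positivity))]
  filter_upwards [self_mem_ae_restrict measurableSet_Ioi] with x (hx : 0 < x)
  positivity

lemma aemeasurable_of_aemeasurable_exp_neg_mul {Ω : Type*} [MeasurableSpace Ω] {μ : Measure Ω}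
    {f : Ω → ℝ} {s : ℝ} (hs : s ≠ 0) (h : AEMeasurable (fun ω => exp (-(s * f ω))) μ) :
    AEMeasurable f μ :=
  (((measurable_log.comp_aemeasurable h).neg).div_const s).congr
    (ae_of_all _ fun ω => by simp [field])

lemma ae_nonneg_of_integral_exp_neg_mul_le_one {Ω : Type*} [MeasurableSpace Ω] {μ : Measure Ω}
    [IsFiniteMeasure μ] {f : Ω → ℝ}
    (hint : ∀ r > 0, Integrable (fun ω => exp (-(r * f ω))) μ)
    (hle : ∀ r > 0, ∫ ω, exp (-(r * f ω)) ∂μ ≤ 1) : 0 ≤ᵐ[μ] f := by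
  have hneg : ∀ ε > 0, μ {ω | f ω ≤ -ε} = 0 := by
    intro ε hε
    have hchernoff : ∀ r > 0, μ.real {ω | f ω ≤ -ε} ≤ exp (-(r * ε)) := by
      intro r hr
      have hmgf : mgf f μ (-r) ≤ 1 := by simpa [mgf, neg_mul] using hle r hr
      calc μ.real {ω | f ω ≤ -ε}
          ≤ exp (-(-r) * -ε) * mgf f μ (-r) :=
            measure_le_le_exp_mul_mgf _ (neg_nonpos.2 hr.le) (by simpa [neg_mul] using hint r hr)
        _ ≤ exp (-(r * ε)) := by
            rw [show -(-r) * -ε = -(r * ε) by ring]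
            exact mul_le_of_le_one_right (exp_pos _).le hmgf
    have hlim : Tendsto (fun r => exp (-(r * ε))) atTop (𝓝 0) :=
      tendsto_exp_neg_atTop_nhds_zero.comp (tendsto_id.atTop_mul_const hε)
    exact (measureReal_eq_zero_iff).1 <| le_antisymm
      (ge_of_tendsto hlim ((eventually_gt_atTop 0).mono hchernoff)) measureReal_nonneg
  refine measure_mono_null (fun ω (hω : ¬ 0 ≤ f ω) => ?_)
    (measure_iUnion_null fun n : ℕ => hneg (1 / (n + 1)) Nat.one_div_pos_of_nat)
  obtain ⟨n, hn⟩ := exists_nat_one_div_lt (neg_pos.2 (not_le.1 hω))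
  exact mem_iUnion.2 ⟨n, show f ω ≤ -(1 / ((n : ℝ) + 1)) by linarith⟩

lemma measure_lt_eq_iSup_rat {Ω : Type*} [MeasurableSpace Ω] (μ : Measure Ω) (f : Ω → ℝ)
    {t : ℝ} (ht : 0 < t) :
    μ {ω | f ω < t} = ⨆ (q : ℚ) (_ : (q : ℝ) ∈ Ioo 0 t), μ {ω | f ω < q} := by
  have hunion : {ω | f ω < t} = ⋃ q ∈ {q : ℚ | (q : ℝ) ∈ Ioo 0 t}, {ω | f ω < q} := by
    ext ω
    simp only [mem_ofPred_eq, mem_iUnion, mem_Ioo, exists_prop]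
    constructor
    · intro hω
      obtain ⟨q, hq, hqt⟩ := exists_rat_btwn (max_lt hω ht)
      exact ⟨q, ⟨(le_max_right _ _).trans_lt hq, hqt⟩, (le_max_left _ _).trans_lt hq⟩
    · rintro ⟨q, ⟨-, hqt⟩, hq⟩
      exact hq.trans hqt
  rw [hunion, measure_biUnion_eq_iSup (Set.to_countable _)]
  · rfl
  · intro q₁ hq₁ q₂ hq₂
    refine ⟨max q₁ q₂, ?_, fun ω (hω : f ω < q₁) => ?_, fun ω (hω : f ω < q₂) => ?_⟩
    · exact ⟨by push_cast; exact lt_max_of_lt_left hq₁.1, by push_cast; exact max_lt hq₁.2 hq₂.2⟩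
    · exact hω.trans_le (by exact_mod_cast le_max_left q₁ q₂)
    · exact hω.trans_le (by exact_mod_cast le_max_right q₁ q₂)

lemma measurable_iSup_rat_mem_Ioo {α : Type*} [MeasurableSpace α] {g : ℚ → α → ℝ≥0∞}
    (hg : ∀ q, Measurable (g q)) :
    Measurable fun z : ℝ × α => ⨆ (q : ℚ) (_ : (q : ℝ) ∈ Ioo 0 z.1), g q z.2 := by
  refine Measurable.iSup fun q => ?_
  simp_rw [iSup_eq_if]
  exact Measurable.ite
    ((MeasurableSet.const _).inter (measurableSet_lt measurable_const measurable_fst))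
    ((hg q).comp measurable_snd) measurable_const

lemma lintegral_mul_measure_lt {Ω : Type*} [MeasurableSpace Ω] {μ : Measure Ω} [SFinite μ]
    {ν : Measure ℝ} [SFinite ν] {f : Ω → ℝ} (hf : AEMeasurable f μ) {g : ℝ → ℝ≥0∞}
    (hg : Measurable g) :
    ∫⁻ t, g t * μ {ω | f ω < t} ∂ν = ∫⁻ ω, ∫⁻ t in Ioi (f ω), g t ∂ν ∂μ := by
  suffices ∀ f' : Ω → ℝ, Measurable f' →
      ∫⁻ t, g t * μ {ω | f' ω < t} ∂ν = ∫⁻ ω, ∫⁻ t in Ioi (f' ω), g t ∂ν ∂μ by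
    have hset : ∀ t, μ {ω | f ω < t} = μ {ω | hf.mk f ω < t} := fun t =>
      measure_congr (hf.ae_eq_mk.fun_comp (· < t))
    rw [lintegral_congr_ae (hf.ae_eq_mk.mono fun ω hω => by rw [hω])]
    simp_rw [hset]
    exact this _ hf.measurable_mk
  intro f hf
  set S := {p : ℝ × Ω | f p.2 < p.1}
  have hS : MeasurableSet S := measurableSet_lt (hf.comp measurable_snd) measurable_fst
  calc ∫⁻ t, g t * μ {ω | f ω < t} ∂ν
      = ∫⁻ t, ∫⁻ ω, S.indicator (fun p => g p.1) (t, ω) ∂μ ∂ν := by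
        congr with t
        rw [← lintegral_indicator_const
          (show MeasurableSet {ω | f ω < t} from hf measurableSet_Iio)]
        rfl
    _ = ∫⁻ ω, ∫⁻ t, S.indicator (fun p => g p.1) (t, ω) ∂ν ∂μ :=
        lintegral_lintegral_swap ((hg.comp measurable_fst).indicator hS).aemeasurable
    _ = ∫⁻ ω, ∫⁻ t in Ioi (f ω), g t ∂ν ∂μ := by
        congr with ω
        rw [← lintegral_indicator measurableSet_Ioi]
        rfl

lemma lintegral_exp_neg_mul_mul_measure_lt {Ω : Type*} [MeasurableSpace Ω] {μ : Measure Ω}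
    [SFinite μ] {f : Ω → ℝ} (hf : AEMeasurable f μ) (hf₀ : 0 ≤ᵐ[μ] f) {s : ℝ} (hs : 0 < s) :
    ∫⁻ t in Ioi 0, ENNReal.ofReal (exp (-(s * t))) * μ {ω | f ω < t} =
      ∫⁻ ω, ENNReal.ofReal (exp (-(s * f ω)) / s) ∂μ := by
  rw [lintegral_mul_measure_lt hf (by fun_prop)]
  refine lintegral_congr_ae (hf₀.mono fun ω (hω : 0 ≤ f ω) => ?_)
  beta_reduce
  rw [Measure.restrict_restrict measurableSet_Ioi, inter_eq_left.2 (Ioi_subset_Ioi hω),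
    lintegral_exp_neg_mul_Ioi hs]

lemma lintegral_exp_neg_mul_mul_measure_lt_of_laplace {Ω : Type*} [MeasurableSpace Ω]
    {μ : Measure Ω} [IsFiniteMeasure μ] {f : Ω → ℝ} {ψ : ℝ → ℝ} (hψ : ∀ r > 0, 0 ≤ ψ r)
    (hlap : ∀ r > 0, ∫ ω, exp (-(r * f ω)) ∂μ = exp (-ψ r)) {s : ℝ} (hs : 0 < s) :
    ∫⁻ t in Ioi 0, ENNReal.ofReal (exp (-(s * t))) * μ {ω | f ω < t} =
      ENNReal.ofReal (exp (-ψ s) / s) := by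
  have hint : ∀ r > 0, Integrable (fun ω => exp (-(r * f ω))) μ := fun r hr =>
    .of_integral_ne_zero (by rw [hlap r hr]; positivity)
  have hf₀ : 0 ≤ᵐ[μ] f := ae_nonneg_of_integral_exp_neg_mul_le_one hint fun r hr => by
    rw [hlap r hr]
    exact exp_le_one_iff.2 (neg_nonpos.2 (hψ r hr))
  rw [lintegral_exp_neg_mul_mul_measure_lt
      (aemeasurable_of_aemeasurable_exp_neg_mul hs.ne' (hint s hs).aemeasurable) hf₀ hs,
    ← hlap s hs, ← integral_div, ofReal_integral_eq_lintegral_ofReal ((hint s hs).div_const s)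
      (ae_of_all _ fun ω => by positivity)]

lemma lintegral_mul_lintegral_mul_swap {α β : Type*} [MeasurableSpace α] [MeasurableSpace β]
    {μ : Measure α} {ν : Measure β} [SFinite μ] [SFinite ν] {a : α → ℝ≥0∞} {b : β → ℝ≥0∞}
    {F : α × β → ℝ≥0∞} (ha : Measurable a) (ha_ne_top : ∀ t, a t ≠ ∞) (hb : Measurable b)
    (hb_ne_top : ∀ x, b x ≠ ∞) (hF : AEMeasurable F (μ.prod ν)) :
    ∫⁻ t, a t * ∫⁻ x, F (t, x) * b x ∂ν ∂μ = ∫⁻ x, b x * ∫⁻ t, a t * F (t, x) ∂μ ∂ν := by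
  simp_rw [← lintegral_const_mul' _ _ (ha_ne_top _), ← lintegral_const_mul' _ _ (hb_ne_top _)]
  rw [lintegral_lintegral_swap ((ha.comp measurable_fst).aemeasurable.mul
    (hF.mul (hb.comp measurable_snd).aemeasurable))]
  congr with x
  congr with t
  ring

lemma ofReal_mul_lintegral_rpow_mul_exp_neg_mul_div {p c s : ℝ} (hp : 0 < p) (hc : 0 < c)
    (hs : 0 < s) :
    ENNReal.ofReal p *
        ∫⁻ x in Ioi 0, ENNReal.ofReal (x ^ (p - 1)) * ENNReal.ofReal (exp (-(x * c)) / s) =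
      ENNReal.ofReal (Gamma (p + 1) / (s * c ^ p)) := by
  have hsplit : ∀ x ∈ Ioi (0 : ℝ),
      ENNReal.ofReal (x ^ (p - 1)) * ENNReal.ofReal (exp (-(x * c)) / s) =
        ENNReal.ofReal (x ^ (p - 1) * exp (-(c * x))) * ENNReal.ofReal s⁻¹ :=
      fun x (hx : 0 < x) => by
    rw [← ENNReal.ofReal_mul (by positivity), ← ENNReal.ofReal_mul (by positivity), mul_comm c,
      div_eq_mul_inv, mul_assoc]
  rw [setLIntegral_congr_fun measurableSet_Ioi hsplit,
    lintegral_mul_const' _ _ ENNReal.ofReal_ne_top,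
    lintegral_rpow_mul_exp_neg_mul_Ioi hp hc,
    ← ENNReal.ofReal_mul (by positivity : (0 : ℝ) ≤ (1 / c) ^ p * Gamma p),
    ← ENNReal.ofReal_mul hp.le, Gamma_add_one hp.ne', one_div, inv_rpow hc.le]
  congr 1
  field_simp

section InverseSubordinator

variable {Ω : Type*} [MeasurableSpace Ω] {μ : Measure Ω} {D E : ℝ → Ω → ℝ}

lemma aemeasurable_measure_lt_of_inverse
    (hinv : ∀ t > (0 : ℝ), ∀ x > (0 : ℝ), μ {ω | x < E t ω} = μ {ω | D x ω < t}) :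
    AEMeasurable (fun z : ℝ × ℝ => μ {ω | D z.2 ω < z.1})
      ((volume.restrict (Ioi 0)).prod (volume.restrict (Ioi 0))) := by
  have hanti : ∀ q : ℚ, Antitone fun x : ℝ => μ {ω | x < E q ω} := fun q x y hxy =>
    measure_mono fun ω (hω : y < E q ω) => hxy.trans_lt hω
  refine ⟨fun z => ⨆ (q : ℚ) (_ : (q : ℝ) ∈ Ioo 0 z.1), μ {ω | z.2 < E q ω},
    measurable_iSup_rat_mem_Ioo fun q => (hanti q).measurable, ?_⟩
  rw [Measure.prod_restrict, EventuallyEq,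
    ae_restrict_iff' (measurableSet_Ioi.prod measurableSet_Ioi)]
  refine ae_of_all _ fun z ⟨(ht : 0 < z.1), (hx : 0 < z.2)⟩ => ?_
  rw [measure_lt_eq_iSup_rat μ _ ht]
  exact biSup_congr fun q hq => (hinv q hq.1 z.2 hx).symm

lemma lintegral_rpow_eq_lintegral_measure_lt_of_inverse {t p : ℝ} (hE : Measurable (E t))
    (hE₀ : ∀ ω, 0 ≤ E t ω) (hinv : ∀ x > (0 : ℝ), μ {ω | x < E t ω} = μ {ω | D x ω < t})
    (hp : 0 < p) :
    ∫⁻ ω, ENNReal.ofReal (E t ω ^ p) ∂μ =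
      ENNReal.ofReal p * ∫⁻ x in Ioi 0, μ {ω | D x ω < t} * ENNReal.ofReal (x ^ (p - 1)) := by
  rw [lintegral_rpow_eq_lintegral_meas_lt_mul μ (ae_of_all _ hE₀) hE.aemeasurable hp]
  congr 1
  exact setLIntegral_congr_fun measurableSet_Ioi fun x hx => by rw [hinv x hx]

lemma exp_neg_mul_mul_lintegral_rpow_ae_eq {p : ℝ} (hmeasE : ∀ t > (0 : ℝ), Measurable (E t))
    (hE₀ : ∀ t ω, 0 ≤ E t ω)
    (hinv : ∀ t > (0 : ℝ), ∀ x > (0 : ℝ), μ {ω | x < E t ω} = μ {ω | D x ω < t})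
    (hp : 0 < p) (s : ℝ) :
    (fun t => ENNReal.ofReal (exp (-(s * t))) * ∫⁻ ω, ENNReal.ofReal (E t ω ^ p) ∂μ)
      =ᵐ[volume.restrict (Ioi 0)] fun t => ENNReal.ofReal p *
        (ENNReal.ofReal (exp (-(s * t))) *
          ∫⁻ x in Ioi 0, μ {ω | D x ω < t} * ENNReal.ofReal (x ^ (p - 1))) := by
  filter_upwards [self_mem_ae_restrict measurableSet_Ioi] with t (ht : 0 < t)
  rw [lintegral_rpow_eq_lintegral_measure_lt_of_inverse (hmeasE t ht) (hE₀ t) (hinv t ht) hp,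
    mul_left_comm]

lemma aemeasurable_exp_neg_mul_mul_lintegral_rpow {p : ℝ}
    (hmeasE : ∀ t > (0 : ℝ), Measurable (E t)) (hE₀ : ∀ t ω, 0 ≤ E t ω)
    (hinv : ∀ t > (0 : ℝ), ∀ x > (0 : ℝ), μ {ω | x < E t ω} = μ {ω | D x ω < t})
    (hp : 0 < p) (s : ℝ) :
    AEMeasurable (fun t => ENNReal.ofReal (exp (-(s * t))) * ∫⁻ ω, ENNReal.ofReal (E t ω ^ p) ∂μ)
      (volume.restrict (Ioi 0)) := by
  refine AEMeasurable.congr ?_ (exp_neg_mul_mul_lintegral_rpow_ae_eq hmeasE hE₀ hinv hp s).symm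
  refine aemeasurable_const.mul ((by fun_prop : Measurable _).aemeasurable.mul ?_)
  exact ((aemeasurable_measure_lt_of_inverse hinv).mul
    (by fun_prop : Measurable fun z : ℝ × ℝ => ENNReal.ofReal (z.2 ^ (p - 1))).aemeasurable)
    |>.lintegral_prod_right'

lemma lintegral_exp_neg_mul_mul_lintegral_rpow [IsFiniteMeasure μ] {φ : ℝ → ℝ} {p s : ℝ}
    (hmeasE : ∀ t > (0 : ℝ), Measurable (E t)) (hE₀ : ∀ t ω, 0 ≤ E t ω)
    (hφ : ∀ s > 0, 0 < φ s)
    (hlap : ∀ s > 0, ∀ x ≥ (0 : ℝ), ∫ ω, exp (-(s * D x ω)) ∂μ = exp (-(x * φ s)))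
    (hinv : ∀ t > (0 : ℝ), ∀ x > (0 : ℝ), μ {ω | x < E t ω} = μ {ω | D x ω < t})
    (hp : 0 < p) (hs : 0 < s) :
    ∫⁻ t in Ioi 0, ENNReal.ofReal (exp (-(s * t))) * ∫⁻ ω, ENNReal.ofReal (E t ω ^ p) ∂μ =
      ENNReal.ofReal (Gamma (p + 1) / (s * φ s ^ p)) := by
  have hcdf : ∀ x ∈ Ioi (0 : ℝ),
      ∫⁻ t in Ioi 0, ENNReal.ofReal (exp (-(s * t))) * μ {ω | D x ω < t} =
        ENNReal.ofReal (exp (-(x * φ s)) / s) := fun x (hx : 0 < x) =>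
    lintegral_exp_neg_mul_mul_measure_lt_of_laplace (ψ := fun r => x * φ r)
      (fun r hr => (mul_pos hx (hφ r hr)).le) (fun r hr => hlap r hr x hx.le) hs
  rw [lintegral_congr_ae (exp_neg_mul_mul_lintegral_rpow_ae_eq hmeasE hE₀ hinv hp s),
    lintegral_const_mul' _ _ ENNReal.ofReal_ne_top,
    lintegral_mul_lintegral_mul_swap (by fun_prop) (fun _ => ENNReal.ofReal_ne_top) (by fun_prop)
      (fun _ => ENNReal.ofReal_ne_top) (aemeasurable_measure_lt_of_inverse hinv),
    setLIntegral_congr_fun measurableSet_Ioi fun x hx => by rw [hcdf x hx]]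
  exact ofReal_mul_lintegral_rpow_mul_exp_neg_mul_div hp (hφ s hs) hs

end InverseSubordinator

/-- Laplace transform of the moments of an inverse subordinator:
`∫₀^∞ e^{-st} E[E_t^p] dt = Γ(p+1)/(s φ(s)^p)`. -/
theorem laplace_transform_inverse_subordinator_moments
    {Ω : Type*} [MeasureSpace Ω] [IsProbabilityMeasure (ℙ : Measure Ω)]
    (D E : ℝ → Ω → ℝ) (φ : ℝ → ℝ)
    (hmeasE : ∀ t > (0 : ℝ), Measurable (E t))
    (hEnonneg : ∀ t ω, 0 ≤ E t ω)
    (hφpos : ∀ s > 0, 0 < φ s)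
    (hlap : ∀ s > 0, ∀ x ≥ (0 : ℝ),
      ∫ ω, Real.exp (-(s * D x ω)) = Real.exp (-(x * φ s)))
    (hinv : ∀ t > (0 : ℝ), ∀ x > (0 : ℝ),
      ℙ {ω | x < E t ω} = ℙ {ω | D x ω < t}) :
    ∀ p > (0 : ℝ), ∀ s > (0 : ℝ),
      ∫ t in Set.Ioi (0 : ℝ), Real.exp (-(s * t)) * ∫ ω, (E t ω) ^ p =
        Real.Gamma (p + 1) / (s * (φ s) ^ p) := by
  intro p hp s hs
  have hmeas := aemeasurable_exp_neg_mul_mul_lintegral_rpow hmeasE hEnonneg hinv hp s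
  have hval := lintegral_exp_neg_mul_mul_lintegral_rpow hmeasE hEnonneg hφpos hlap hinv hp hs
  have hpt : EqOn (fun t => exp (-(s * t)) * ∫ ω, E t ω ^ p)
      (fun t => (ENNReal.ofReal (exp (-(s * t))) * ∫⁻ ω, ENNReal.ofReal (E t ω ^ p)).toReal)
      (Ioi 0) := fun t (ht : 0 < t) => by
    dsimp only
    rw [ENNReal.toReal_mul, ENNReal.toReal_ofReal (exp_pos _).le,
      integral_eq_lintegral_of_nonneg_ae (ae_of_all _ fun ω => rpow_nonneg (hEnonneg t ω) p)
        ((hmeasE t ht).pow_const p).aestronglyMeasurable]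
  rw [setIntegral_congr_fun measurableSet_Ioi hpt,
    integral_toReal hmeas (ae_lt_top' hmeas (hval ▸ ENNReal.ofReal_ne_top)), hval,
    ENNReal.toReal_ofReal (div_nonneg (Gamma_pos_of_pos (by linarith)).le
      (mul_pos hs (rpow_pos_of_pos (hφpos s hs) p)).le)]
end

section
/- Let Ω be a bounded open set in ℝ^d, (W_t) a Brownian motion in ℝ^d independent of a subordinator (D_t) with infinite Lévy measure (hence strictly increasing paths). Define Q̃(t) = ∫_Ω P_x(τ_Ω^W > sup_{0≤s≤t} D_s) dx, where τ_Ω^W is the first exit time of W from Ω. Then t ↦ Q̃(t) is continuous on (0,∞). -/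
/-!
On almost every path of the subordinator `sup_{s ≤ t} D_s = D_t`, so the integrand of `Q t` is
`P(D_t < τ_x)`. As `s → t`, `D_s → D_t` almost surely (paths are right-continuous, and stationary
increments exclude a jump at the fixed time `t`), hence `P(D_s < τ_x) → P(D_t < τ_x)` whenever
`P(τ_x = D_t) = 0`, and dominated convergence over `x ∈ O` gives continuity of `Q`.
That last condition holds for a.e. `x` by translation invariance of Lebesgue measure:
if `τ_x = D_t` then `x + W_{θ D_t} ∈ O` and `x + W_{D_t} ∉ O` for every `θ < 1`, and the set of
such `x` is a translate of `(O - v) \ O` with `v = W_{θ D_t} - W_{D_t} → 0` as `θ → 1`.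
-/

open MeasureTheory ProbabilityTheory Filter Set Metric Topology
open scoped ENNReal

section ExitTime

variable {E : Type*} {O : Set E} {γ : ℝ → E}

/-- Since `sInf ∅ = 0`, a path that never leaves `O` gets exit time `0`, not `∞`. -/
noncomputable def exitTime (O : Set E) (γ : ℝ → E) : ℝ :=
  sInf {u | 0 < u ∧ γ u ∉ O}

lemma exitTime_nonneg : 0 ≤ exitTime O γ :=
  Real.sInf_nonneg fun _ hu => hu.1.le

lemma bddBelow_exitTimes : BddBelow {u | 0 < u ∧ γ u ∉ O} :=
  ⟨0, fun _ hu => hu.1.le⟩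

lemma mapsTo_Ioo_exitTime : MapsTo γ (Ioo 0 (exitTime O γ)) O := fun u hu => by
  by_contra hγu
  exact (csInf_le bddBelow_exitTimes ⟨hu.1, hγu⟩).not_gt hu.2

lemma nonempty_exitTimes_of_exitTime_pos (h : 0 < exitTime O γ) :
    {u | 0 < u ∧ γ u ∉ O}.Nonempty := by
  by_contra hempty
  rw [not_nonempty_iff_eq_empty] at hempty
  simp [exitTime, hempty] at h

lemma apply_exitTime_notMem [TopologicalSpace E] (hO : IsOpen O) (hγ : Continuous γ)
    (h : 0 < exitTime O γ) :
    γ (exitTime O γ) ∉ O := by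
  have hmem := csInf_mem_closure (nonempty_exitTimes_of_exitTime_pos h) bddBelow_exitTimes
  exact closure_minimal (fun u hu => hu.2) (hO.isClosed_compl.preimage hγ) hmem

lemma lt_exitTime_iff [TopologicalSpace E] (hO : IsOpen O) (hγ : Continuous γ) {c : ℝ}
    (hc : 0 < c) :
    c < exitTime O γ ↔ (∃ u, 0 < u ∧ γ u ∉ O) ∧ MapsTo γ (Ioc 0 c) O := by
  refine ⟨fun h => ⟨nonempty_exitTimes_of_exitTime_pos (hc.trans h),
    mapsTo_Ioo_exitTime.mono_left (Ioc_subset_Ioo_right h)⟩, fun ⟨hexit, hstay⟩ => ?_⟩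
  have hle : c ≤ exitTime O γ := le_csInf hexit fun u hu =>
    le_of_not_gt fun huc => hu.2 (hstay ⟨hu.1, huc.le⟩)
  refine hle.lt_of_ne fun heq => ?_
  exact apply_exitTime_notMem hO hγ (heq ▸ hc) (heq ▸ hstay ⟨hc, le_rfl⟩)

lemma mem_and_notMem_of_exitTime_eq [TopologicalSpace E] (hO : IsOpen O) (hγ : Continuous γ)
    {c θ : ℝ} (hc : 0 < c) (hθ : θ ∈ Ioo 0 1)
    (h : exitTime O γ = c) : γ (θ * c) ∈ O ∧ γ c ∉ O := by
  subst h
  exact ⟨mapsTo_Ioo_exitTime ⟨mul_pos hθ.1 hc, mul_lt_of_lt_one_left hc hθ.2⟩,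
    apply_exitTime_notMem hO hγ hc⟩

end ExitTime

section Measurability

variable {T Ω E : Type*} [MeasurableSpace Ω] [PseudoMetricSpace E] [MeasurableSpace E]
  [OpensMeasurableSpace E] {O : Set E}

lemma measurableSet_mapsTo_of_isCompact [TopologicalSpace T]
    [TopologicalSpace.PseudoMetrizableSpace T] [TopologicalSpace.SeparableSpace T]
    {X : T → Ω → E} (hX : ∀ t, Measurable (X t)) (hXc : ∀ ω, Continuous fun t => X t ω)
    (hO : IsOpen O) {K : Set T} (hK : IsCompact K) :
    MeasurableSet {ω | MapsTo (fun t => X t ω) K O} := by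
  rcases Oᶜ.eq_empty_or_nonempty with hOc | hOc
  · simp [compl_empty_iff.1 hOc]
  obtain ⟨S, hSK, hS, hKS⟩ :=
    (TopologicalSpace.IsSeparable.of_separableSpace K).exists_countable_dense_subset
  have hmem : ∀ {y}, y ∈ O ↔ 0 < infDist y Oᶜ := by
    intro y; rw [← hO.isClosed_compl.notMem_iff_infDist_pos hOc, notMem_compl_iff]
  -- on the compact `K` the distance to `Oᶜ` is bounded below, and it suffices to check this on `S`
  have key : ∀ ω, MapsTo (fun t => X t ω) K O ↔
      ∃ n : ℕ, ∀ s ∈ S, 1 / ((n : ℝ) + 1) ≤ infDist (X s ω) Oᶜ := by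
    intro ω
    have hf : Continuous fun t => infDist (X t ω) Oᶜ := (continuous_infDist_pt _).comp (hXc ω)
    constructor
    · intro h
      obtain ⟨δ, hδ, hδK⟩ := hK.exists_forall_le' hf.continuousOn fun t ht => hmem.1 (h ht)
      obtain ⟨n, hn⟩ := exists_nat_one_div_lt hδ
      exact ⟨n, fun s hs => hn.le.trans (hδK s (hSK hs))⟩
    · rintro ⟨n, hn⟩ t ht
      have : t ∈ {t | 1 / ((n : ℝ) + 1) ≤ infDist (X t ω) Oᶜ} :=
        closure_minimal hn (isClosed_le continuous_const hf) (hKS ht)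
      exact hmem.2 (lt_of_lt_of_le (by positivity) this)
  simp_rw [key, ofPred_exists, ofPred_forall]
  exact .iUnion fun n => .biInter hS fun s _ =>
    measurableSet_le measurable_const ((continuous_infDist_pt _).measurable.comp (hX s))

variable {X : ℝ → Ω → E}

lemma measurableSet_mapsTo_Ioc (hX : ∀ t, Measurable (X t))
    (hXc : ∀ ω, Continuous fun t => X t ω) (hO : IsOpen O) (c : ℝ) :
    MeasurableSet {ω | MapsTo (fun t => X t ω) (Ioc 0 c) O} := by
  have hIoc : Ioc 0 c = ⋃ n : ℕ, Icc (1 / ((n : ℝ) + 1)) c := by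
    ext u
    simp only [mem_Ioc, mem_iUnion, mem_Icc]
    refine ⟨fun ⟨hu, huc⟩ => ?_, fun ⟨n, hn, huc⟩ => ⟨lt_of_lt_of_le (by positivity) hn, huc⟩⟩
    obtain ⟨n, hn⟩ := exists_nat_one_div_lt hu
    exact ⟨n, hn.le, huc⟩
  simp_rw [hIoc, mapsTo_iUnion, ofPred_forall]
  exact .iInter fun n => measurableSet_mapsTo_of_isCompact hX hXc hO isCompact_Icc

lemma measurableSet_exists_notMem (hX : ∀ t, Measurable (X t))
    (hXc : ∀ ω, Continuous fun t => X t ω) (hO : IsOpen O) :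
    MeasurableSet {ω | ∃ u, 0 < u ∧ X u ω ∉ O} := by
  have key : ∀ ω, (∃ u, 0 < u ∧ X u ω ∉ O) ↔ ∃ n : ℕ, ¬ MapsTo (fun t => X t ω) (Ioc 0 n) O := by
    intro ω
    refine ⟨fun ⟨u, hu, hXu⟩ => ?_, fun ⟨n, hn⟩ => ?_⟩
    · obtain ⟨n, hn⟩ := exists_nat_ge u
      exact ⟨n, fun h => hXu (h ⟨hu, hn⟩)⟩
    · by_contra! h
      exact hn fun u hu => h u hu.1
  simp_rw [key, ofPred_exists]
  exact .iUnion fun n => (measurableSet_mapsTo_Ioc hX hXc hO n).compl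

lemma measurable_exitTime (hX : ∀ t, Measurable (X t))
    (hXc : ∀ ω, Continuous fun t => X t ω) (hO : IsOpen O) :
    Measurable fun ω => exitTime O fun t => X t ω := by
  refine measurable_of_Ioi fun c => ?_
  rcases lt_or_ge c 0 with hc | hc
  · convert MeasurableSet.univ
    exact eq_univ_of_forall fun ω => hc.trans_le exitTime_nonneg
  have key : ∀ ω, c < exitTime O (fun t => X t ω) ↔ ∃ n : ℕ,
      (∃ u, 0 < u ∧ X u ω ∉ O) ∧ MapsTo (fun t => X t ω) (Ioc 0 (c + 1 / ((n : ℝ) + 1))) O := by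
    intro ω
    have hpos : ∀ n : ℕ, 0 < c + 1 / ((n : ℝ) + 1) := fun n => by positivity
    simp_rw [← lt_exitTime_iff hO (hXc ω) (hpos _)]
    refine ⟨fun h => ?_, fun ⟨n, hn⟩ => lt_of_le_of_lt (le_add_of_nonneg_right (by positivity)) hn⟩
    obtain ⟨n, hn⟩ := exists_nat_one_div_lt (sub_pos.2 h)
    exact ⟨n, by linarith⟩
  simp_rw [preimage, mem_Ioi, key, ofPred_exists]
  exact .iUnion fun n => (measurableSet_exists_notMem hX hXc hO).inter
    (measurableSet_mapsTo_Ioc hX hXc hO _)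

end Measurability

lemma exists_continuous_modification {T Ω E : Type*} [MeasurableSpace Ω] [TopologicalSpace T]
    [TopologicalSpace E] [MeasurableSpace E] [Nonempty E] {μ : Measure Ω} {X : T → Ω → E}
    (hX : ∀ t, Measurable (X t)) (hXc : ∀ᵐ ω ∂μ, Continuous fun t => X t ω) :
    ∃ Y : T → Ω → E, (∀ t, Measurable (Y t)) ∧ (∀ ω, Continuous fun t => Y t ω) ∧
      ∀ᵐ ω ∂μ, ∀ t, Y t ω = X t ω := by
  classical
  obtain ⟨G, hG, hGm, hGc⟩ := hXc.exists_measurable_mem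
  refine ⟨fun t ω => if ω ∈ G then X t ω else Classical.arbitrary E,
    fun t => Measurable.ite hGm (hX t) measurable_const, fun ω => ?_, ?_⟩
  · by_cases hω : ω ∈ G
    · simpa [hω] using hGc ω hω
    · simpa [hω] using continuous_const
  · filter_upwards [hG] with ω hω t
    simp [hω]

section Subordinator

variable {Ω : Type*} [MeasurableSpace Ω] {μ : Measure Ω} {D : ℝ → Ω → ℝ}

lemma continuousWithinAt_Iic_of_monotoneOn {f : ℝ → ℝ} {a t : ℝ} (hf : MonotoneOn f (Icc a t))
    (h : ∀ n : ℕ, ∃ r ∈ Ico a t, f t - 1 / ((n : ℝ) + 1) < f r) :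
    ContinuousWithinAt f (Iic t) t := by
  refine tendsto_order.2 ⟨fun b hb => ?_, fun b hb => ?_⟩
  · obtain ⟨n, hn⟩ := exists_nat_one_div_lt (sub_pos.2 hb)
    obtain ⟨r, hr, hfr⟩ := h n
    filter_upwards [Ioc_mem_nhdsLE hr.2] with u hu
    have := hf ⟨hr.1, hr.2.le⟩ ⟨hr.1.trans hu.1.le, hu.2⟩ hu.1.le
    linarith
  · obtain ⟨r, hr, -⟩ := h 0
    filter_upwards [Ioc_mem_nhdsLE hr.2] with u hu
    exact (hf ⟨hr.1.trans hu.1.le, hu.2⟩ ⟨hr.1.trans hr.2.le, le_rfl⟩ hu.2).trans_lt hb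

lemma ae_exists_lt_of_map_sub_eq [IsFiniteMeasure μ] (hD : ∀ t, Measurable (D t))
    (hstat : ∀ s t : ℝ, 0 ≤ s → 0 ≤ t →
      Measure.map (fun ω => D (s + t) ω - D s ω) μ = Measure.map (D t) μ)
    (hpath : ∀ᵐ ω ∂μ, D 0 ω = 0 ∧ ContinuousWithinAt (fun s => D s ω) (Ici 0) 0)
    {t ε : ℝ} (ht : 0 < t) (hε : 0 < ε) : ∀ᵐ ω ∂μ, ∃ r ∈ Ico 0 t, D t ω - ε < D r ω := by
  have hsmall : Tendsto (fun h => μ {ω | ε ≤ D h ω}) (𝓝[>] 0) (𝓝 0) := by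
    refine measure_empty (μ := μ) ▸ tendsto_measure_of_ae_tendsto_indicator (𝓝[>] 0)
      MeasurableSet.empty (fun h => measurableSet_le measurable_const (hD h)) MeasurableSet.univ
      (measure_ne_top μ univ) (.of_forall fun _ => subset_univ _) ?_
    filter_upwards [hpath] with ω hω
    have hright : Tendsto (fun h => D h ω) (𝓝[>] 0) (𝓝 (D 0 ω)) :=
      (hω.2.mono Ioi_subset_Ici_self).tendsto
    rw [hω.1] at hright
    filter_upwards [hright.eventually (eventually_lt_nhds hε)] with h hh
    simp [hh]
  -- `D t - D (t - h)` has the law of `D h`, which is small for small `h`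
  rw [ae_iff]
  refine nonpos_iff_eq_zero.1 (ge_of_tendsto hsmall ?_)
  filter_upwards [Ioc_mem_nhdsGT ht] with h hh
  calc μ {ω | ¬∃ r ∈ Ico 0 t, D t ω - ε < D r ω}
      ≤ μ ((fun ω => D (t - h + h) ω - D (t - h) ω) ⁻¹' Ici ε) := by
        refine measure_mono fun ω hω => ?_
        simp only [mem_ofPred_eq, not_exists, not_and, not_lt] at hω
        have := hω (t - h) ⟨sub_nonneg.2 hh.2, sub_lt_self _ hh.1⟩
        simp only [sub_add_cancel, mem_preimage, mem_Ici]
        linarith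
    _ = μ {ω | ε ≤ D h ω} := by
        rw [← Measure.map_apply (f := fun ω => D (t - h + h) ω - D (t - h) ω)
            ((hD _).sub (hD _)) measurableSet_Ici,
          hstat _ _ (sub_nonneg.2 hh.2) hh.1.le, Measure.map_apply (hD _) measurableSet_Ici]
        rfl

lemma ae_continuousAt_of_map_sub_eq [IsFiniteMeasure μ] (hD : ∀ t, Measurable (D t))
    (hstat : ∀ s t : ℝ, 0 ≤ s → 0 ≤ t →
      Measure.map (fun ω => D (s + t) ω - D s ω) μ = Measure.map (D t) μ)
    (hpath : ∀ᵐ ω ∂μ, D 0 ω = 0 ∧ MonotoneOn (fun s => D s ω) (Ici 0) ∧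
      ∀ t ≥ (0 : ℝ), ContinuousWithinAt (fun s => D s ω) (Ici t) t)
    {t : ℝ} (ht : 0 < t) : ∀ᵐ ω ∂μ, ContinuousAt (fun s => D s ω) t := by
  have hjump : ∀ n : ℕ, ∀ᵐ ω ∂μ, ∃ r ∈ Ico 0 t, D t ω - 1 / ((n : ℝ) + 1) < D r ω := fun n =>
    ae_exists_lt_of_map_sub_eq hD hstat (hpath.mono fun ω h => ⟨h.1, h.2.2 0 le_rfl⟩) ht
      Nat.one_div_pos_of_nat
  filter_upwards [hpath, ae_all_iff.2 hjump] with ω h hω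
  exact continuousAt_iff_continuous_left_right.2
    ⟨continuousWithinAt_Iic_of_monotoneOn (h.2.1.mono Icc_subset_Ici_self) hω, h.2.2 t ht.le⟩

end Subordinator

section Translation

variable {G : Type*} [AddGroup G] [TopologicalSpace G] [ContinuousAdd G] [MeasurableSpace G]
  [OpensMeasurableSpace G] [MeasurableAdd₂ G] (ν : Measure G) [ν.IsAddRightInvariant]
  {O : Set G}

lemma tendsto_measure_preimage_add_diff_self {ι : Type*} (hO : IsOpen O) (hνO : ν O ≠ ∞)
    {l : Filter ι} [l.IsCountablyGenerated] {v : ι → G} (hv : Tendsto v l (𝓝 0)) :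
    Tendsto (fun i => ν ((· + v i) ⁻¹' O \ O)) l (𝓝 0) := by
  have hmeas : ∀ i, MeasurableSet ((· + v i) ⁻¹' O) := fun i =>
    hO.measurableSet.preimage (measurable_add_const _)
  have hinter : Tendsto (fun i => ν ((· + v i) ⁻¹' O ∩ O)) l (𝓝 (ν O)) := by
    refine tendsto_measure_of_tendsto_indicator l (fun i => (hmeas i).inter hO.measurableSet)
      hO.measurableSet hνO (.of_forall fun i => inter_subset_right) fun y => ?_
    by_cases hy : y ∈ O
    · have : Tendsto (fun i => y + v i) l (𝓝 y) := by simpa using tendsto_const_nhds.add hv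
      filter_upwards [this.eventually (hO.eventually_mem hy)] with i hi
      simp [hi, hy]
    · exact .of_forall fun i => by simp [hy]
  have hdiff : ∀ i, ν ((· + v i) ⁻¹' O \ O) = ν O - ν ((· + v i) ⁻¹' O ∩ O) := fun i => by
    rw [← sdiff_self_inter, measure_sdiff inter_subset_left
      ((hmeas i).inter hO.measurableSet).nullMeasurableSet
      (measure_ne_top_of_subset inter_subset_right hνO), measure_preimage_add_right]
  simpa [hdiff] using ENNReal.Tendsto.sub tendsto_const_nhds hinter (.inl hνO)

lemma tendsto_lintegral_measure_preimage_add_diff_self [SFinite ν] {Ω ι : Type*} [MeasurableSpace Ω]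
    {μ : Measure Ω} [IsFiniteMeasure μ] (hO : IsOpen O) (hνO : ν O ≠ ∞) {l : Filter ι}
    [l.IsCountablyGenerated] {v : ι → Ω → G} (hv : ∀ i, Measurable (v i))
    (hlim : ∀ ω, Tendsto (fun i => v i ω) l (𝓝 0)) :
    Tendsto (fun i => ∫⁻ ω, ν ((· + v i ω) ⁻¹' O \ O) ∂μ) l (𝓝 0) := by
  have hmeas : Measurable fun y : G => ν ((· + y) ⁻¹' O \ O) :=
    measurable_measure_prodMk_left (s := {p : G × G | p.2 + p.1 ∈ O ∧ p.2 ∉ O})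
      ((hO.measurableSet.preimage (measurable_snd.add measurable_fst)).inter
        (hO.measurableSet.compl.preimage measurable_snd))
  rw [← lintegral_zero]
  refine tendsto_lintegral_filter_of_dominated_convergence (fun _ => ν O)
    (.of_forall fun i => hmeas.comp (hv i)) (.of_forall fun i => .of_forall fun ω => ?_)
    (by simpa using ENNReal.mul_ne_top hνO (measure_ne_top μ univ))
    (.of_forall fun ω => tendsto_measure_preimage_add_diff_self ν hO hνO (hlim ω))
  exact (measure_mono sdiff_subset).trans_eq (measure_preimage_add_right _ _ _)

end Translation

theorem ae_measure_exitTime_eq_eq_zero {Ω E : Type*} [MeasurableSpace Ω] {μ : Measure Ω}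
    [IsFiniteMeasure μ] [NormedAddCommGroup E] [MeasurableSpace E] [BorelSpace E]
    [SecondCountableTopology E] (ν : Measure E) [SFinite ν] [ν.IsAddRightInvariant]
    {W : ℝ → Ω → E} (hW : ∀ t, Measurable (W t)) (hWc : ∀ ω, Continuous fun t => W t ω)
    {O : Set E} (hO : IsOpen O) (hνO : ν O ≠ ∞) {S : Ω → ℝ} (hS : Measurable S)
    (hSpos : ∀ᵐ ω ∂μ, 0 < S ω) :
    ∀ᵐ x ∂ν, μ {ω | exitTime O (fun t => x + W t ω) = S ω} = 0 := by
  have hτ : Measurable fun z : E × Ω => exitTime O fun t => z.1 + W t z.2 :=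
    measurable_exitTime (fun t => measurable_fst.add ((hW t).comp measurable_snd))
      (fun z => continuous_const.add (hWc z.2)) hO
  set A := {z : E × Ω | exitTime O (fun t => z.1 + W t z.2) = S z.2}
  have hA : MeasurableSet A := measurableSet_eq_fun hτ (hS.comp measurable_snd)
  suffices (ν.prod μ) A = 0 from (Measure.measure_prod_null hA).1 this
  have hWjoint : Measurable (Function.uncurry W) :=
    measurable_uncurry_of_continuous_of_measurable hWc hW
  set v : ℝ → Ω → E := fun θ ω => W (θ * S ω) ω - W (S ω) ω
  have hv : ∀ θ, Measurable (v θ) := fun θ =>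
    (hWjoint.comp ((measurable_const.mul hS).prodMk measurable_id)).sub
      (hWjoint.comp (hS.prodMk measurable_id))
  have hbound : ∀ θ ∈ Ioo (0 : ℝ) 1,
      (ν.prod μ) A ≤ ∫⁻ ω, ν ((· + v θ ω) ⁻¹' O \ O) ∂μ := by
    intro θ hθ
    rw [Measure.prod_apply_symm hA]
    refine lintegral_mono_ae ?_
    filter_upwards [hSpos] with ω hω
    calc ν ((fun x => (x, ω)) ⁻¹' A)
        ≤ ν ((· + W (S ω) ω) ⁻¹' ((· + v θ ω) ⁻¹' O \ O)) := by
          refine measure_mono fun x hx => ?_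
          have := mem_and_notMem_of_exitTime_eq hO (continuous_const.add (hWc ω)) hω hθ hx
          simpa [v] using this
      _ = ν ((· + v θ ω) ⁻¹' O \ O) := measure_preimage_add_right _ _ _
  have hlim : Tendsto (fun θ => ∫⁻ ω, ν ((· + v θ ω) ⁻¹' O \ O) ∂μ) (𝓝[<] 1) (𝓝 0) := by
    refine tendsto_lintegral_measure_preimage_add_diff_self ν hO hνO hv fun ω => ?_
    have hθS : Tendsto (fun θ : ℝ => θ * S ω) (𝓝[<] 1) (𝓝 (S ω)) := by
      simpa using (tendsto_nhdsWithin_of_tendsto_nhds (tendsto_id (x := 𝓝 (1 : ℝ)))).mul_const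
        (S ω)
    simpa [v] using ((hWc ω).tendsto (S ω)).comp hθS |>.sub_const (W (S ω) ω)
  exact nonpos_iff_eq_zero.1 <| ge_of_tendsto hlim <|
    Filter.mem_of_superset (Ioo_mem_nhdsLT zero_lt_one) hbound

lemma continuousAt_measure_lt {Ω : Type*} [MeasurableSpace Ω] {μ : Measure Ω} [IsFiniteMeasure μ]
    {R : ℝ → Ω → ℝ} {τ : Ω → ℝ} {t : ℝ} (hR : ∀ s, Measurable (R s)) (hτ : Measurable τ)
    (hRt : ∀ᵐ ω ∂μ, ContinuousAt (fun s => R s ω) t) (hτR : μ {ω | τ ω = R t ω} = 0) :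
    ContinuousAt (fun s => μ {ω | R s ω < τ ω}) t := by
  refine tendsto_measure_of_ae_tendsto_indicator (𝓝 t) (measurableSet_lt (hR t) hτ)
    (fun s => measurableSet_lt (hR s) hτ) MeasurableSet.univ (measure_ne_top μ univ)
    (.of_forall fun _ => subset_univ _) ?_
  filter_upwards [hRt, measure_eq_zero_iff_ae_notMem.1 hτR] with ω hc hne
  rcases lt_or_gt_of_ne (Ne.symm hne) with h | h
  · filter_upwards [hc.eventually (eventually_lt_nhds h)] with s hs
    simp [hs, h]
  · filter_upwards [hc.eventually (eventually_gt_nhds h)] with s hs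
    simp [hs.le.not_gt, h.le.not_gt]

theorem continuousAt_setIntegral_measureReal_lt_exitTime {Ω E : Type*} [MeasurableSpace Ω]
    {μ : Measure Ω} [IsProbabilityMeasure μ] [NormedAddCommGroup E] [MeasurableSpace E]
    [BorelSpace E] [SecondCountableTopology E] (ν : Measure E) [SFinite ν] [ν.IsAddRightInvariant]
    {W : ℝ → Ω → E} (hW : ∀ t, Measurable (W t)) (hWc : ∀ ω, Continuous fun t => W t ω)
    {O : Set E} (hO : IsOpen O) (hνO : ν O ≠ ∞) {R : ℝ → Ω → ℝ} (hR : ∀ s, Measurable (R s))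
    {t : ℝ} (hRt : ∀ᵐ ω ∂μ, ContinuousAt (fun s => R s ω) t) (hRpos : ∀ᵐ ω ∂μ, 0 < R t ω) :
    ContinuousAt (fun s => ∫ x in O, μ.real {ω | R s ω < exitTime O fun u => x + W u ω} ∂ν) t := by
  have hτ : Measurable fun z : E × Ω => exitTime O fun u => z.1 + W u z.2 :=
    measurable_exitTime (fun u => measurable_fst.add ((hW u).comp measurable_snd))
      (fun z => continuous_const.add (hWc z.2)) hO
  have hτx : ∀ x, Measurable fun ω => exitTime O fun u => x + W u ω := fun x =>
    measurable_exitTime (fun u => measurable_const.add (hW u))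
      (fun ω => continuous_const.add (hWc ω)) hO
  have : IsFiniteMeasure (ν.restrict O) := isFiniteMeasure_restrict.2 hνO
  refine continuousAt_of_dominated (bound := fun _ => 1) (.of_forall fun s => ?_)
    (.of_forall fun s => .of_forall fun x => ?_) (integrable_const 1) (ae_restrict_of_ae ?_)
  · exact (measurable_measure_prodMk_left (measurableSet_lt ((hR s).comp measurable_snd)
      hτ)).ennreal_toReal.aestronglyMeasurable
  · simp [abs_of_nonneg measureReal_nonneg, measureReal_le_one]
  · filter_upwards [ae_measure_exitTime_eq_eq_zero ν hW hWc hO hνO (hR t) hRpos] with x hx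
    exact (ENNReal.tendsto_toReal (measure_ne_top μ _)).comp
      (continuousAt_measure_lt hR (hτx x) hRt hx)

theorem spectral_heat_content_continuous_general
    {d : ℕ}
    {Ω₁ Ω₂ : Type*} [MeasurableSpace Ω₁] [MeasurableSpace Ω₂]
    (μ₁ : Measure Ω₁) (μ₂ : Measure Ω₂)
    [IsProbabilityMeasure μ₁] [IsProbabilityMeasure μ₂]
    (W : ℝ → Ω₁ → EuclideanSpace ℝ (Fin d))
    (D : ℝ → Ω₂ → ℝ)
    (O : Set (EuclideanSpace ℝ (Fin d))) (hO : IsOpen O)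
    (hObd : Bornology.IsBounded O)
    -- Brownian motion with E[e^{i⟨ξ,W_t⟩}] = e^{-t|ξ|²}
    (hWmeas : ∀ t, Measurable (W t))
    (hWcont : ∀ᵐ ω₁ ∂μ₁, Continuous fun t => W t ω₁)
    -- Lévy subordinator with strictly increasing (infinite Lévy measure) paths
    (hDmeas : ∀ t, Measurable (D t))
    (hDpath : ∀ᵐ ω₂ ∂μ₂, D 0 ω₂ = 0 ∧ StrictMonoOn (fun s => D s ω₂) (Set.Ici 0) ∧
      ∀ t ≥ (0 : ℝ), ContinuousWithinAt (fun s => D s ω₂) (Set.Ici t) t)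
    (hDstat : ∀ s t : ℝ, 0 ≤ s → 0 ≤ t →
      Measure.map (fun ω₂ => D (s + t) ω₂ - D s ω₂) μ₂ = Measure.map (D t) μ₂)
    (Q : ℝ → ℝ)
    (hQ : ∀ t, Q t = ∫ x in O,
      ((μ₁.prod μ₂) {p : Ω₁ × Ω₂ |
        sSup ((fun s => D s p.2) '' Set.Icc 0 t) <
          sInf {u : ℝ | 0 < u ∧ x + W u p.1 ∉ O}}).toReal) :
    ContinuousOn Q (Set.Ioi 0) := by
  obtain ⟨V, hVmeas, hVcont, hVW⟩ := exists_continuous_modification hWmeas hWcont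
  have hQV : EqOn Q (fun s => ∫ x in O,
      (μ₁.prod μ₂).real {p | D s p.2 < exitTime O fun u => x + V u p.1}) (Ioi 0) := by
    intro s hs
    rw [hQ]
    refine integral_congr_ae (.of_forall fun x => congrArg ENNReal.toReal (measure_congr ?_))
    filter_upwards [Measure.quasiMeasurePreserving_fst.ae hVW,
      Measure.quasiMeasurePreserving_snd.ae hDpath] with p hV hD
    change (_ < _) = (_ < _)
    rw [(hD.2.1.monotoneOn.mono Icc_subset_Ici_self).sSup_image_Icc hs.le]
    simp only [exitTime, hV]
  refine ContinuousOn.congr (fun t (ht : 0 < t) => ContinuousAt.continuousWithinAt ?_) hQV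
  have hDcont := ae_continuousAt_of_map_sub_eq hDmeas hDstat
    (hDpath.mono fun ω h => ⟨h.1, h.2.1.monotoneOn, h.2.2⟩) ht
  have hDpos : ∀ᵐ ω ∂μ₂, 0 < D t ω := by
    filter_upwards [hDpath] with ω h
    simpa only [h.1] using h.2.1 self_mem_Ici ht.le ht
  exact continuousAt_setIntegral_measureReal_lt_exitTime volume
    (fun u => (hVmeas u).comp measurable_fst) (fun p => hVcont p.1) hO hObd.measure_lt_top.ne
    (fun s => (hDmeas s).comp measurable_snd) (Measure.quasiMeasurePreserving_snd.ae hDcont)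
    (Measure.quasiMeasurePreserving_snd.ae hDpos)

/-- Continuity on `(0, ∞)` of the spectral heat content
`Q̃(t) = ∫_Ω P_x(τ_Ω^W > sup_{0 ≤ s ≤ t} D_s) dx` of a subordinate killed Brownian
motion, where `W` is a `d`-dimensional Brownian motion independent of a subordinator
`D` with strictly increasing paths (infinite Lévy measure), and `Ω` is a bounded open
set. Independence is modelled via the product measure `μ₁.prod μ₂`. -/
theorem spectral_heat_content_continuous
    {d : ℕ} (hd : 1 ≤ d)
    {Ω₁ Ω₂ : Type*} [MeasurableSpace Ω₁] [MeasurableSpace Ω₂]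
    (μ₁ : Measure Ω₁) (μ₂ : Measure Ω₂)
    [IsProbabilityMeasure μ₁] [IsProbabilityMeasure μ₂]
    (W : ℝ → Ω₁ → EuclideanSpace ℝ (Fin d))
    (D : ℝ → Ω₂ → ℝ)
    (O : Set (EuclideanSpace ℝ (Fin d))) (hO : IsOpen O)
    (hObd : Bornology.IsBounded O)
    -- Brownian motion with E[e^{i⟨ξ,W_t⟩}] = e^{-t|ξ|²}
    (hWmeas : ∀ t, Measurable (W t))
    (hWcont : ∀ᵐ ω₁ ∂μ₁, Continuous fun t => W t ω₁)
    (hW0 : ∀ᵐ ω₁ ∂μ₁, W 0 ω₁ = 0)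
    (hWindep : ∀ (n : ℕ) (u : Fin (n + 1) → ℝ), Monotone u →
      iIndepFun
        (fun i : Fin n => fun ω₁ => W (u i.succ) ω₁ - W (u i.castSucc) ω₁) μ₁)
    (hWgauss : ∀ s t : ℝ, 0 ≤ s → s ≤ t → ∀ ξ : EuclideanSpace ℝ (Fin d),
      ∫ ω₁, Complex.exp (Complex.I * ((inner ℝ ξ (W t ω₁ - W s ω₁) : ℝ) : ℂ)) ∂μ₁ =
        Complex.exp (-(((t : ℂ) - s) * (‖ξ‖ : ℂ) ^ 2)))
    -- Lévy subordinator with strictly increasing (infinite Lévy measure) paths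
    (hDmeas : ∀ t, Measurable (D t))
    (hDpath : ∀ᵐ ω₂ ∂μ₂, D 0 ω₂ = 0 ∧ StrictMonoOn (fun s => D s ω₂) (Set.Ici 0) ∧
      ∀ t ≥ (0 : ℝ), ContinuousWithinAt (fun s => D s ω₂) (Set.Ici t) t)
    (hDstat : ∀ s t : ℝ, 0 ≤ s → 0 ≤ t →
      Measure.map (fun ω₂ => D (s + t) ω₂ - D s ω₂) μ₂ = Measure.map (D t) μ₂)
    (hDindep : ∀ (n : ℕ) (u : Fin (n + 1) → ℝ), Monotone u →
      iIndepFun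
        (fun i : Fin n => fun ω₂ => D (u i.succ) ω₂ - D (u i.castSucc) ω₂) μ₂)
    (Q : ℝ → ℝ)
    (hQ : ∀ t, Q t = ∫ x in O,
      ((μ₁.prod μ₂) {p : Ω₁ × Ω₂ |
        sSup ((fun s => D s p.2) '' Set.Icc 0 t) <
          sInf {u : ℝ | 0 < u ∧ x + W u p.1 ∉ O}}).toReal) :
    ContinuousOn Q (Set.Ioi 0) :=
  spectral_heat_content_continuous_general μ₁ μ₂ W D O hO hObd hWmeas hWcont hDmeas hDpath hDstat Q
    hQ
end
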